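/- arXiv:1101.0713 — 3 statements merged into one kernel-verified Lean document; each statement's English description precedes it below -/
import Mathlib

section
/- If F is a smooth solution of the expander ODE F'' + ((d−1)/y + y/2) F' − (d−1)/(2y²) sin(2F) = 0 on (0,∞), then V(y) = y F'(y) satisfies the linearized equation ℬ V = V pointwise, where ℬ V = −V'' − ((d−1)/y + y/2) V' + (d−1)/y² · cos(2F) V. -/
open Real

/-- Gauge mode of an expander: if `F` solves the expander ODE then `V(y) = y F'(y)`
satisfies the linearized equation `ℬ V = V` pointwise on `(0,∞)`, where
`ℬ V = −V'' − ((d−1)/y + y/2) V' + (d−1)/y² · cos(2F) V`. -/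
theorem expander_gauge_mode (d : ℕ) (hd : 2 ≤ d) (F : ℝ → ℝ)
    (hF : ContDiffOn ℝ (⊤ : ℕ∞) F (Set.Ioi 0))
    (hODE : ∀ y : ℝ, 0 < y →
      deriv (deriv F) y + (((d : ℝ) - 1) / y + y / 2) * deriv F y
        - ((d : ℝ) - 1) / (2 * y ^ 2) * Real.sin (2 * F y) = 0) :
    ∀ y : ℝ, 0 < y →
      -(deriv (deriv (fun z => z * deriv F z)) y)
        - (((d : ℝ) - 1) / y + y / 2) * deriv (fun z => z * deriv F z) y
        + ((d : ℝ) - 1) / y ^ 2 * Real.cos (2 * F y) * (y * deriv F y)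
        = y * deriv F y := by
  have hF' : ContDiffOn ℝ (⊤ : ℕ∞) (deriv F) (Set.Ioi 0) :=
    hF.deriv_of_isOpen isOpen_Ioi (by simp)
  have hF'' : ContDiffOn ℝ (⊤ : ℕ∞) (deriv (deriv F)) (Set.Ioi 0) :=
    hF'.deriv_of_isOpen isOpen_Ioi (by simp)
  have hdF : ∀ x ∈ Set.Ioi (0:ℝ), HasDerivAt F (deriv F x) x := fun x hx =>
    ((hF.contDiffAt (isOpen_Ioi.mem_nhds hx)).differentiableAt (by simp)).hasDerivAt
  have hdF' : ∀ x ∈ Set.Ioi (0:ℝ), HasDerivAt (deriv F) (deriv (deriv F) x) x := fun x hx =>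
    ((hF'.contDiffAt (isOpen_Ioi.mem_nhds hx)).differentiableAt (by simp)).hasDerivAt
  have hdF'' : ∀ x ∈ Set.Ioi (0:ℝ), HasDerivAt (deriv (deriv F)) (deriv (deriv (deriv F)) x) x :=
    fun x hx =>
    ((hF''.contDiffAt (isOpen_Ioi.mem_nhds hx)).differentiableAt (by simp)).hasDerivAt
  intro y hy
  have hy0 : y ≠ 0 := ne_of_gt hy
  have hs : Set.Ioi (0:ℝ) ∈ nhds y := isOpen_Ioi.mem_nhds hy
  -- first derivative of V
  have hVd : ∀ x ∈ Set.Ioi (0:ℝ),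
      HasDerivAt (fun z => z * deriv F z) (deriv F x + x * deriv (deriv F) x) x := by
    intro x hx
    have := (hasDerivAt_id' x).mul (hdF' x hx)
    exact this.congr_deriv (by rw [one_mul])
  have hV1 : deriv (fun z => z * deriv F z) y = deriv F y + y * deriv (deriv F) y :=
    (hVd y hy).deriv
  -- second derivative of V
  have hVee : deriv (fun z => z * deriv F z) =ᶠ[nhds y]
      fun x => deriv F x + x * deriv (deriv F) x :=
    Filter.eventuallyEq_of_mem hs (fun x hx => (hVd x hx).deriv)
  have hV2 : deriv (deriv (fun z => z * deriv F z)) y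
      = deriv (deriv F) y + (deriv (deriv F) y + y * deriv (deriv (deriv F)) y) := by
    rw [hVee.deriv_eq]
    have h := (hdF' y hy).add ((hasDerivAt_id' y).mul (hdF'' y hy))
    have := h.deriv
    rw [one_mul] at this; exact this
  -- third derivative of F via the ODE
  set G : ℝ → ℝ := fun x =>
    -((((d:ℝ) - 1) / x + x / 2) * deriv F x)
      + ((d:ℝ) - 1) / (2 * x ^ 2) * Real.sin (2 * F x) with hGdef
  have hGeq : ∀ x ∈ Set.Ioi (0:ℝ), deriv (deriv F) x = G x := by
    intro x hx
    have := hODE x hx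
    simp only [hGdef]
    linarith
  have hEE : deriv (deriv F) =ᶠ[nhds y] G := Filter.eventuallyEq_of_mem hs hGeq
  -- derivative of G at y
  have ha : HasDerivAt (fun z : ℝ => ((d:ℝ) - 1) / z + z / 2)
      (-(((d:ℝ) - 1) / y ^ 2) + 1 / 2) y := by
    have h1 : HasDerivAt (fun z : ℝ => ((d:ℝ) - 1) / z) (-(((d:ℝ) - 1) / y ^ 2)) y := by
      simpa [div_eq_mul_inv, mul_neg] using (hasDerivAt_inv hy0).const_mul ((d:ℝ) - 1)
    have h2 : HasDerivAt (fun z : ℝ => z / 2) (1 / 2 : ℝ) y := by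
      simpa using (hasDerivAt_id y).div_const 2
    exact h1.add h2
  have hb : HasDerivAt (fun z : ℝ => ((d:ℝ) - 1) / (2 * z ^ 2))
      (-(((d:ℝ) - 1) / y ^ 3)) y := by
    have hp : HasDerivAt (fun z : ℝ => z ^ 2) (2 * y) y := by
      simpa using hasDerivAt_pow 2 y
    have := (hp.inv (pow_ne_zero 2 hy0)).const_mul (((d:ℝ) - 1) / 2)
    have heq : (fun z : ℝ => ((d:ℝ) - 1) / (2 * z ^ 2)) = fun z : ℝ => ((d:ℝ) - 1) / 2 * (z ^ 2)⁻¹ := by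
      funext z; ring
    rw [heq]
    refine this.congr_deriv ?_
    field_simp
  have hsin : HasDerivAt (fun z => Real.sin (2 * F z))
      (Real.cos (2 * F y) * (2 * deriv F y)) y :=
    ((hdF y hy).const_mul 2).sin
  have hG' : HasDerivAt G
      (-((-(((d:ℝ) - 1) / y ^ 2) + 1 / 2) * deriv F y
          + (((d:ℝ) - 1) / y + y / 2) * deriv (deriv F) y)
        + (-(((d:ℝ) - 1) / y ^ 3) * Real.sin (2 * F y)
          + ((d:ℝ) - 1) / (2 * y ^ 2) * (Real.cos (2 * F y) * (2 * deriv F y)))) y :=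
    ((ha.mul (hdF' y hy)).neg).add (hb.mul hsin)
  have h3 : deriv (deriv (deriv F)) y
      = -((-(((d:ℝ) - 1) / y ^ 2) + 1 / 2) * deriv F y
          + (((d:ℝ) - 1) / y + y / 2) * deriv (deriv F) y)
        + (-(((d:ℝ) - 1) / y ^ 3) * Real.sin (2 * F y)
          + ((d:ℝ) - 1) / (2 * y ^ 2) * (Real.cos (2 * F y) * (2 * deriv F y))) := by
    rw [hEE.deriv_eq]; exact hG'.deriv
  have key := hODE y hy
  rw [hV1, hV2, h3]
  field_simp at key ⊢
  ring_nf at key ⊢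
  linear_combination (-2 : ℝ) * key
end

section
/- For 5 ≤ d ≤ 9, the function φ₁(y) = y²/(b + a y²) with a = √(d−2)/(2√2) and b = (6d − 12 − (d+2)√(2d−4))/2 satisfies the Yang–Mills shrinker ODE φ'' + ((d−3)/y − y/2) φ' − (d−2)/y² · φ(φ−1)(φ−2) = 0 on (0,∞). -/
open Real

/-!
Writing `a = √(d−2)/(2√2)`, one has `d = 8a² + 2`, `√(2d−4) = 4a` and
`b = 8a(2a−1)(1−a)`, so `φ₁` belongs to the one-parameter family
`φ_a(y) = y² / (8a(2a−1)(1−a) + a y²)`. For every `a` the residual of the shrinker ODE in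
dimension `8a² + 2` vanishes identically: `φ_a'` and `φ_a''` are explicit rational functions
and the residual clears to a polynomial identity in `a` and `y`. For integers, `5 ≤ d ≤ 9` is
exactly `1/2 < a < 1`, which keeps `b > 0`, so `φ_a` is smooth on all of `ℝ`.
-/

/-- The explicit stable Yang–Mills shrinker `φ₁(y) = y²/(b + a y²)` with
`a = √(d−2)/(2√2)` and `b = (6d − 12 − (d+2)√(2d−4))/2`. -/
noncomputable def ymShrinker (d : ℕ) (y : ℝ) : ℝ :=
  y ^ 2 /
    ((6 * (d : ℝ) - 12 - ((d : ℝ) + 2) * Real.sqrt (2 * (d : ℝ) - 4)) / 2 +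
      Real.sqrt ((d : ℝ) - 2) / (2 * Real.sqrt 2) * y ^ 2)

noncomputable def shrinkerResidual (d : ℝ) (φ : ℝ → ℝ) (y : ℝ) : ℝ :=
  deriv (deriv φ) y + ((d - 3) / y - y / 2) * deriv φ y
    - (d - 2) / y ^ 2 * (φ y * (φ y - 1) * (φ y - 2))

section RationalProfile

variable {a b z : ℝ}

theorem hasDerivAt_sq_div_add_mul_sq (hz : b + a * z ^ 2 ≠ 0) :
    HasDerivAt (fun w : ℝ => w ^ 2 / (b + a * w ^ 2)) (2 * b * z / (b + a * z ^ 2) ^ 2) z := by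
  have hsq : HasDerivAt (fun w : ℝ => w ^ 2) (2 * z) z := by simpa using hasDerivAt_pow 2 z
  refine (hsq.fun_div ((hsq.const_mul a).const_add b) hz).congr_deriv ?_
  field_simp
  ring

theorem hasDerivAt_mul_div_add_mul_sq_sq (hz : b + a * z ^ 2 ≠ 0) :
    HasDerivAt (fun w : ℝ => 2 * b * w / (b + a * w ^ 2) ^ 2)
      (2 * b * (b - 3 * a * z ^ 2) / (b + a * z ^ 2) ^ 3) z := by
  have hsq : HasDerivAt (fun w : ℝ => w ^ 2) (2 * z) z := by simpa using hasDerivAt_pow 2 z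
  have hden := ((hsq.const_mul a).const_add b).fun_pow 2
  refine (((hasDerivAt_id' z).const_mul (2 * b)).fun_div hden (pow_ne_zero 2 hz)).congr_deriv ?_
  field_simp
  ring

theorem deriv_sq_div_add_mul_sq (hden : ∀ z, b + a * z ^ 2 ≠ 0) :
    deriv (fun w : ℝ => w ^ 2 / (b + a * w ^ 2)) = fun z => 2 * b * z / (b + a * z ^ 2) ^ 2 :=
  funext fun z => (hasDerivAt_sq_div_add_mul_sq (hden z)).deriv

theorem shrinkerResidual_sq_div_eq_zero (ha : 1 / 2 < a) (ha' : a < 1) (hz : z ≠ 0) :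
    shrinkerResidual (8 * a ^ 2 + 2)
      (fun w => w ^ 2 / (8 * a * (2 * a - 1) * (1 - a) + a * w ^ 2)) z = 0 := by
  set b := 8 * a * (2 * a - 1) * (1 - a) with hb
  have hb_pos : 0 < b := by
    have : 0 < 2 * a - 1 := by linarith
    have : 0 < 1 - a := by linarith
    positivity
  have hden : ∀ w, b + a * w ^ 2 ≠ 0 := fun w => by positivity
  have hz' := hden z
  rw [shrinkerResidual, deriv_sq_div_add_mul_sq hden,
    (hasDerivAt_mul_div_add_mul_sq_sq hz').deriv]
  field_simp
  rw [hb]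
  ring

end RationalProfile

theorem sqrt_two_mul_sub_four (d : ℝ) : √(2 * d - 4) = 4 * (√(d - 2) / (2 * √2)) := by
  have h2 : √2 ^ 2 = 2 := sq_sqrt zero_le_two
  rw [show 2 * d - 4 = 2 * (d - 2) by ring, sqrt_mul zero_le_two]
  field_simp
  rw [h2]
  ring

/-- For `5 ≤ d ≤ 9`, the explicit function `φ₁` satisfies the Yang–Mills shrinker ODE
`φ'' + ((d−3)/y − y/2) φ' − (d−2)/y² · φ(φ−1)(φ−2) = 0` on `(0,∞)`. -/
theorem ymShrinker_solves_ODE (d : ℕ) (hd5 : 5 ≤ d) (hd9 : d ≤ 9) :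
    ∀ y : ℝ, 0 < y →
      deriv (deriv (ymShrinker d)) y + (((d : ℝ) - 3) / y - y / 2) * deriv (ymShrinker d) y
        - ((d : ℝ) - 2) / y ^ 2 *
            (ymShrinker d y * (ymShrinker d y - 1) * (ymShrinker d y - 2)) = 0 := by
  intro y hy
  have hd5' : (5 : ℝ) ≤ d := by exact_mod_cast hd5
  have hd9' : (d : ℝ) ≤ 9 := by exact_mod_cast hd9
  set a := √((d : ℝ) - 2) / (2 * √2) with ha
  have ha_nonneg : 0 ≤ a := by positivity
  have hd : (d : ℝ) = 8 * a ^ 2 + 2 := by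
    rw [ha, div_pow, mul_pow, sq_sqrt (by linarith), sq_sqrt zero_le_two]
    ring
  have hφ : ymShrinker d = fun w => w ^ 2 / (8 * a * (2 * a - 1) * (1 - a) + a * w ^ 2) := by
    funext w
    rw [ymShrinker, sqrt_two_mul_sub_four, ← ha, hd]
    ring
  have hresidual := shrinkerResidual_sq_div_eq_zero (a := a) (by nlinarith) (by nlinarith) hy.ne'
  rwa [← hd, ← hφ] at hresidual
end

section
/- The function v(y) = y^{1−d/2+iω} U(1/2 − d/4 + iω/2 − λ, 1 + iω, y²/4), where U is the Tricomi confluent hypergeometric function and ω = √(8d−d²−8)/2, solves the eigenvalue equation −v'' − ((d−1)/y − y/2) v' − (d−1)/y² · v = λ v on (0,∞). -/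
/-!
Substituting `v(y) = y^c W(y²/4)` into `𝒜_∞ v` splits it into two pieces: a multiple of
`y^{c-2} W` by the indicial polynomial `c² + (d-2)c + (d-1)`, and `y^c` times the Kummer
expression for `W` with parameters `(c/2, c + d/2)`. The exponent `c = 1 - d/2 + iω` is a root of
the indicial polynomial exactly because `4ω² = 8d - d² - 8`; and `c + d/2 = 1 + iω` while `c/2 - λ`
is the first Kummer parameter, so the Kummer equation leaves `λ W`, i.e. `𝒜_∞ v = λ v`.
-/

open Real Complex

/-- The operator `𝒜_∞ v = −(1/ρ)(ρ v')' − (n−1)/y² · v` with `ρ(y) = y^{n−1} e^{−y²/4}`. -/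
noncomputable def equatorOperator (n : ℂ) (v : ℝ → ℂ) (y : ℝ) : ℂ :=
  -(deriv (deriv v) y) - ((n - 1) / y - y / 2) * deriv v y - (n - 1) / y ^ 2 * v y

section PowerTimesQuadraticSubstitution

variable {F : ℂ → ℂ} {c : ℂ} {x : ℝ}

theorem hasDerivAt_ofReal_cpow_mul_comp_sq_div_four
    (hF : DifferentiableAt ℂ F ((x : ℂ) ^ 2 / 4)) (hx : 0 < x) :
    HasDerivAt (fun t : ℝ => (t : ℂ) ^ c * F ((t : ℂ) ^ 2 / 4))
      (c * ((x : ℂ) ^ (c - 1) * F ((x : ℂ) ^ 2 / 4))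
        + (x : ℂ) ^ (c + 1) * deriv F ((x : ℂ) ^ 2 / 4) / 2) x := by
  have hpow : HasDerivAt (fun t : ℝ => (t : ℂ) ^ c) (c * (x : ℂ) ^ (c - 1)) x := by
    simpa using
      ((hasDerivAt_id (x : ℂ)).cpow_const (c := c) (Or.inl (by simpa using hx))).comp_ofReal
  have hsq : HasDerivAt (fun z : ℂ => z ^ 2 / 4) ((x : ℂ) / 2) (x : ℂ) := by
    refine ((hasDerivAt_pow 2 (x : ℂ)).div_const 4).congr_deriv ?_
    norm_num
    ring
  have hcomp := (hF.hasDerivAt.comp (x : ℂ) hsq).comp_ofReal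
  refine (hpow.mul hcomp).congr_deriv ?_
  rw [cpow_add _ _ (ofReal_ne_zero.mpr hx.ne'), cpow_one, Function.comp_apply]
  ring

theorem deriv_deriv_ofReal_cpow_mul_comp_sq_div_four (hF : Differentiable ℂ F)
    (hF' : Differentiable ℂ (deriv F)) (hx : 0 < x) :
    deriv (deriv fun t : ℝ => (t : ℂ) ^ c * F ((t : ℂ) ^ 2 / 4)) x =
      c * (c - 1) * (x : ℂ) ^ (c - 2) * F ((x : ℂ) ^ 2 / 4)
        + (c + 1 / 2) * (x : ℂ) ^ c * deriv F ((x : ℂ) ^ 2 / 4)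
        + (x : ℂ) ^ (c + 2) / 4 * deriv (deriv F) ((x : ℂ) ^ 2 / 4) := by
  have hderiv : deriv (fun t : ℝ => (t : ℂ) ^ c * F ((t : ℂ) ^ 2 / 4)) =ᶠ[nhds x]
      fun t : ℝ => c * ((t : ℂ) ^ (c - 1) * F ((t : ℂ) ^ 2 / 4))
        + (t : ℂ) ^ (c + 1) * deriv F ((t : ℂ) ^ 2 / 4) / 2 :=
    Filter.eventuallyEq_of_mem (Ioi_mem_nhds hx) fun t ht =>
      (hasDerivAt_ofReal_cpow_mul_comp_sq_div_four hF.differentiableAt ht).deriv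
  rw [hderiv.deriv_eq]
  have hlow := (hasDerivAt_ofReal_cpow_mul_comp_sq_div_four (c := c - 1)
    hF.differentiableAt hx).const_mul c
  have hhigh := (hasDerivAt_ofReal_cpow_mul_comp_sq_div_four (c := c + 1)
    hF'.differentiableAt hx).div_const 2
  refine (hlow.add hhigh).deriv.trans ?_
  rw [show c - 1 - 1 = c - 2 by ring, sub_add_cancel, add_sub_cancel_right, add_assoc,
    one_add_one_eq_two]
  ring

theorem equatorOperator_ofReal_cpow_mul_comp_sq_div_four (n : ℂ) (hF : Differentiable ℂ F)
    (hF' : Differentiable ℂ (deriv F)) (hx : 0 < x) :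
    equatorOperator n (fun t : ℝ => (t : ℂ) ^ c * F ((t : ℂ) ^ 2 / 4)) x =
      -(c ^ 2 + (n - 2) * c + (n - 1)) * (x : ℂ) ^ (c - 2) * F ((x : ℂ) ^ 2 / 4)
        - (x : ℂ) ^ c * ((x : ℂ) ^ 2 / 4 * deriv (deriv F) ((x : ℂ) ^ 2 / 4)
          + (c + n / 2 - (x : ℂ) ^ 2 / 4) * deriv F ((x : ℂ) ^ 2 / 4)
          - c / 2 * F ((x : ℂ) ^ 2 / 4)) := by
  have hx0 : (x : ℂ) ≠ 0 := ofReal_ne_zero.mpr hx.ne'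
  have shift (e : ℂ) (k : ℕ) (he : e = c - 2 + k) :
      (x : ℂ) ^ e = (x : ℂ) ^ (c - 2) * (x : ℂ) ^ k := by
    rw [he, cpow_add _ _ hx0, cpow_natCast]
  rw [equatorOperator, deriv_deriv_ofReal_cpow_mul_comp_sq_div_four hF hF' hx,
    (hasDerivAt_ofReal_cpow_mul_comp_sq_div_four hF.differentiableAt hx).deriv,
    shift (c - 1) 1 (by push_cast; ring), shift (c + 1) 3 (by push_cast; ring),
    shift (c + 2) 4 (by push_cast; ring), shift c 2 (by push_cast; ring)]
  field_simp
  ring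

end PowerTimesQuadraticSubstitution

theorem indicial_eq_zero {n ω : ℂ} (hω : 4 * ω ^ 2 = 8 * n - n ^ 2 - 8) :
    (1 - n / 2 + I * ω) ^ 2 + (n - 2) * (1 - n / 2 + I * ω) + (n - 1) = 0 := by
  linear_combination ω ^ 2 * I_sq - hω / 4

/-- The function `v(y) = y^{1−d/2+iω} U(1/2 − d/4 + iω/2 − λ, 1 + iω, y²/4)`, built from
any solution `U = W` of the Kummer ODE `z w'' + (b−z) w' − a w = 0` with
`a = 1/2 − d/4 + iω/2 − λ`, `b = 1 + iω`, `ω = √(8d−d²−8)/2`, solves the eigenvalue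
equation `−v'' − ((d−1)/y − y/2) v' − (d−1)/y² · v = λ v` on `(0,∞)`. -/
theorem equator_linearized_eigenfunction (d : ℕ) (hd3 : 3 ≤ d) (hd6 : d ≤ 6) (lam : ℂ)
    (W : ℂ → ℂ) (hW2 : ContDiff ℂ 2 W)
    (hW : ∀ z : ℂ, 0 < z.re →
      z * iteratedDeriv 2 W z
        + ((1 + Complex.I * (Real.sqrt (8 * (d : ℝ) - (d : ℝ) ^ 2 - 8) / 2 : ℝ)) - z) * deriv W z
        - ((1 : ℂ) / 2 - (d : ℂ) / 4
            + Complex.I * (Real.sqrt (8 * (d : ℝ) - (d : ℝ) ^ 2 - 8) / 2 : ℝ) / 2 - lam) * W z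
        = 0)
    (v : ℝ → ℂ)
    (hv : v = fun y : ℝ =>
      (y : ℂ) ^ ((1 : ℂ) - (d : ℂ) / 2
          + Complex.I * (Real.sqrt (8 * (d : ℝ) - (d : ℝ) ^ 2 - 8) / 2 : ℝ))
        * W ((y : ℂ) ^ 2 / 4)) :
    ∀ y : ℝ, 0 < y →
      -(deriv (deriv v) y) - (((d : ℂ) - 1) / (y : ℂ) - (y : ℂ) / 2) * deriv v y
        - ((d : ℂ) - 1) / (y : ℂ) ^ 2 * v y = lam * v y := by
  intro y hy
  set ω : ℝ := √(8 * (d : ℝ) - (d : ℝ) ^ 2 - 8) / 2 with hω_def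
  have hω : 4 * (ω : ℂ) ^ 2 = 8 * (d : ℂ) - (d : ℂ) ^ 2 - 8 := by
    have hnonneg : 0 ≤ 8 * (d : ℝ) - (d : ℝ) ^ 2 - 8 := by
      have h3 : (3 : ℝ) ≤ d := by exact_mod_cast hd3
      have h6 : (d : ℝ) ≤ 6 := by exact_mod_cast hd6
      nlinarith
    have h : 4 * ω ^ 2 = 8 * (d : ℝ) - (d : ℝ) ^ 2 - 8 := by
      rw [hω_def, div_pow, sq_sqrt hnonneg]
      ring
    exact_mod_cast h
  have hz : 0 < ((y : ℂ) ^ 2 / 4).re := by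
    rw [show (y : ℂ) ^ 2 / 4 = ((y ^ 2 / 4 : ℝ) : ℂ) by push_cast; ring, ofReal_re]
    positivity
  have hK := hW _ hz
  rw [iteratedDeriv_succ, iteratedDeriv_one] at hK
  subst hv
  change equatorOperator d _ y = _
  rw [equatorOperator_ofReal_cpow_mul_comp_sq_div_four _ (hW2.differentiable two_ne_zero)
    hW2.differentiable_deriv_two hy, indicial_eq_zero hω]
  linear_combination -(y : ℂ) ^ (1 - (d : ℂ) / 2 + I * ω) * hK
end
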